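/- arXiv:1508.03516 — 5 statements merged into one kernel-verified Lean document; each statement's English description precedes it below -/
import Mathlib

section
/- Let a < b be real numbers, set h = b − a, and let f : ℝ → ℝ be continuously differentiable on [a,b]. Then sup_{x ∈ [a,b]} |f(x)| ≤ h^{−1/2} (∫_a^b f(x)² dx)^{1/2} + (1/√2) · h^{1/2} (∫_a^b f′(x)² dx)^{1/2}. In particular, if f is not identically zero on [a,b], the smoothness indicator satisfies 𝓕_{[a,b]}[f] ≤ 1. -/
/-- The smoothness indicator `𝓕_{[a,b]}[f]` for a nonzero function `f` on `[a,b]` with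
`h = b - a`:
`𝓕 = ‖f‖_{L^∞(a,b)} / (h^{-1/2} ‖f‖_{L²(a,b)} + (1/√2) h^{1/2} ‖f'‖_{L²(a,b)})`. -/
noncomputable def smoothnessIndicator (a b : ℝ) (f : ℝ → ℝ) : ℝ :=
  sSup ((fun x => |f x|) '' Set.Icc a b) /
    ((b - a) ^ (-(1 : ℝ) / 2) * Real.sqrt (∫ x in a..b, f x ^ 2) +
      (1 / Real.sqrt 2) * (b - a) ^ ((1 : ℝ) / 2) * Real.sqrt (∫ x in a..b, deriv f x ^ 2))

/-!
For `x, y ∈ [a,b]` the fundamental theorem of calculus and Cauchy–Schwarz give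
`|f x| ≤ |f y| + √|x - y| ‖f'‖₂`. Averaging over `y ∈ [a,b]` and applying Cauchy–Schwarz
twice more, to `∫ |f|` and to `∫ √|x - y| dy ≤ √h (∫ |x - y| dy)^{1/2} ≤ √h · h/√2`, yields
`h |f x| ≤ √h ‖f‖₂ + √h · h/√2 · ‖f'‖₂`. Since `𝓕` is a quotient `s / r` with `0 ≤ s ≤ r`,
the bound on the indicator follows.
-/

open MeasureTheory Set

section CauchySchwarz

variable {u v : ℝ} {g : ℝ → ℝ}

theorem sq_intervalIntegral_le_mul_integral_sq (huv : u ≤ v)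
    (hg : IntervalIntegrable g volume u v)
    (hg2 : IntervalIntegrable (fun y => g y ^ 2) volume u v) :
    (∫ y in u..v, g y) ^ 2 ≤ (v - u) * ∫ y in u..v, g y ^ 2 := by
  rcases huv.eq_or_lt with rfl | hlt
  · simp
  set I := ∫ y in u..v, g y
  set J := ∫ y in u..v, g y ^ 2
  -- `0 ≤ ∫ (g - m)²` for the mean value `m` of `g`
  set m := I / (v - u)
  have hm : m * (v - u) = I := div_mul_cancel₀ _ (sub_pos.2 hlt).ne'
  have hexpand : ∫ y in u..v, (g y - m) ^ 2 = J - 2 * m * I + m ^ 2 * (v - u) := by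
    have hpt : ∀ y, (g y - m) ^ 2 = (g y ^ 2 - (2 * m) * g y) + m ^ 2 := fun y => by ring
    simp_rw [hpt]
    rw [intervalIntegral.integral_add (hg2.sub (hg.const_mul _)) intervalIntegrable_const,
      intervalIntegral.integral_sub hg2 (hg.const_mul _), intervalIntegral.integral_const_mul,
      intervalIntegral.integral_const, smul_eq_mul]
    ring
  have hnonneg : 0 ≤ ∫ y in u..v, (g y - m) ^ 2 :=
    intervalIntegral.integral_nonneg huv fun _ _ => sq_nonneg _
  nlinarith [sq_nonneg (I - m * (v - u))]

theorem intervalIntegral_abs_le_sqrt_mul_sqrt_integral_sq (huv : u ≤ v)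
    (hg : IntervalIntegrable g volume u v)
    (hg2 : IntervalIntegrable (fun y => g y ^ 2) volume u v) :
    ∫ y in u..v, |g y| ≤ √(v - u) * √(∫ y in u..v, g y ^ 2) := by
  have hsq := sq_intervalIntegral_le_mul_integral_sq huv hg.abs (by simpa only [sq_abs] using hg2)
  simp only [sq_abs] at hsq
  rw [← Real.sqrt_mul (sub_nonneg.2 huv)]
  exact Real.le_sqrt_of_sq_le hsq

end CauchySchwarz

section DerivL2

variable {a b : ℝ} {f f' : ℝ → ℝ}

theorem abs_sub_le_sqrt_mul_sqrt_integral_deriv_sq_of_le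
    (hf : ∀ x ∈ Icc a b, HasDerivAt f (f' x) x) (hf' : ContinuousOn f' (Icc a b))
    {u v : ℝ} (hau : a ≤ u) (huv : u ≤ v) (hvb : v ≤ b) :
    |f v - f u| ≤ √(v - u) * √(∫ y in a..b, f' y ^ 2) := by
  have hsub : uIcc u v ⊆ Icc a b := by
    rw [uIcc_of_le huv]
    exact Icc_subset_Icc hau hvb
  have hf'uv : ContinuousOn f' (uIcc u v) := hf'.mono hsub
  rw [← intervalIntegral.integral_eq_sub_of_hasDerivAt (fun x hx => hf x (hsub hx))
    hf'uv.intervalIntegrable]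
  calc |∫ y in u..v, f' y| ≤ ∫ y in u..v, |f' y| :=
        intervalIntegral.abs_integral_le_integral_abs huv
    _ ≤ √(v - u) * √(∫ y in u..v, f' y ^ 2) :=
        intervalIntegral_abs_le_sqrt_mul_sqrt_integral_sq huv hf'uv.intervalIntegrable
          (hf'uv.pow 2).intervalIntegrable
    _ ≤ √(v - u) * √(∫ y in a..b, f' y ^ 2) := by
        gcongr
        exact intervalIntegral.integral_mono_interval hau huv hvb
          (Filter.Eventually.of_forall fun y => sq_nonneg _)
          ((hf'.pow 2).intervalIntegrable_of_Icc (hau.trans (huv.trans hvb)))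

theorem abs_sub_le_sqrt_mul_sqrt_integral_deriv_sq
    (hf : ∀ x ∈ Icc a b, HasDerivAt f (f' x) x) (hf' : ContinuousOn f' (Icc a b))
    {x y : ℝ} (hx : x ∈ Icc a b) (hy : y ∈ Icc a b) :
    |f x - f y| ≤ √|x - y| * √(∫ t in a..b, f' t ^ 2) := by
  rcases le_total y x with hyx | hxy
  · rw [abs_of_nonneg (sub_nonneg.2 hyx)]
    exact abs_sub_le_sqrt_mul_sqrt_integral_deriv_sq_of_le hf hf' hy.1 hyx hx.2
  · rw [abs_sub_comm, abs_sub_comm x, abs_of_nonneg (sub_nonneg.2 hxy)]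
    exact abs_sub_le_sqrt_mul_sqrt_integral_deriv_sq_of_le hf hf' hx.1 hxy hy.2

end DerivL2

section DistanceIntegrals

variable {a b x : ℝ}

theorem integral_abs_sub_of_mem_Icc (hx : x ∈ Icc a b) :
    ∫ y in a..b, |x - y| = ((x - a) ^ 2 + (b - x) ^ 2) / 2 := by
  have hcont : Continuous fun y : ℝ => |x - y| := by fun_prop
  rw [← intervalIntegral.integral_add_adjacent_intervals (hcont.intervalIntegrable a x)
    (hcont.intervalIntegrable x b)]
  have hleft : ∫ y in a..x, |x - y| = ∫ y in a..x, (x - y) :=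
    intervalIntegral.integral_congr fun y hy => by
      rw [uIcc_of_le hx.1] at hy
      exact abs_of_nonneg (sub_nonneg.2 hy.2)
  have hright : ∫ y in x..b, |x - y| = ∫ y in x..b, (y - x) :=
    intervalIntegral.integral_congr fun y hy => by
      rw [uIcc_of_le hx.2] at hy
      exact abs_of_nonpos (sub_nonpos.2 hy.1) |>.trans (neg_sub x y)
  rw [hleft, hright, intervalIntegral.integral_sub intervalIntegrable_const
      intervalIntegral.intervalIntegrable_id,
    intervalIntegral.integral_sub intervalIntegral.intervalIntegrable_id intervalIntegrable_const,
    intervalIntegral.integral_const, intervalIntegral.integral_const, integral_id, integral_id,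
    smul_eq_mul, smul_eq_mul]
  ring

theorem integral_sqrt_abs_sub_le (hx : x ∈ Icc a b) :
    ∫ y in a..b, √|x - y| ≤ √(b - a) * ((b - a) / √2) := by
  have hab : a ≤ b := hx.1.trans hx.2
  have hsqrt : Continuous fun y : ℝ => √|x - y| := by fun_prop
  have hcs := intervalIntegral_abs_le_sqrt_mul_sqrt_integral_sq hab
    (hsqrt.intervalIntegrable a b) (hsqrt.pow 2 |>.intervalIntegrable a b)
  simp only [abs_of_nonneg (Real.sqrt_nonneg _), Real.sq_sqrt (abs_nonneg _),
    integral_abs_sub_of_mem_Icc hx] at hcs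
  refine hcs.trans (mul_le_mul_of_nonneg_left ?_ (Real.sqrt_nonneg _))
  rw [← Real.sqrt_sq (sub_nonneg.2 hab), ← Real.sqrt_div' _ (by norm_num : (0 : ℝ) ≤ 2)]
  gcongr
  nlinarith [mul_nonneg (sub_nonneg.2 hx.1) (sub_nonneg.2 hx.2)]

end DistanceIntegrals

theorem abs_le_sqrt_integral_sq_add_sqrt_integral_deriv_sq {a b x : ℝ} {f f' : ℝ → ℝ} (hab : a < b)
    (hf : ∀ x ∈ Icc a b, HasDerivAt f (f' x) x) (hf' : ContinuousOn f' (Icc a b))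
    (hx : x ∈ Icc a b) :
    |f x| ≤ (√(b - a))⁻¹ * √(∫ y in a..b, f y ^ 2) +
      1 / √2 * √(b - a) * √(∫ y in a..b, f' y ^ 2) := by
  set F := √(∫ y in a..b, f y ^ 2)
  set D := √(∫ y in a..b, f' y ^ 2)
  have hD : 0 ≤ D := Real.sqrt_nonneg _
  have hfc : ContinuousOn f (Icc a b) := fun y hy => (hf y hy).continuousAt.continuousWithinAt
  have hfabs : IntervalIntegrable (fun y => |f y|) volume a b :=
    hfc.abs.intervalIntegrable_of_Icc hab.le
  have hdist : IntervalIntegrable (fun y => √|x - y| * D) volume a b :=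
    (by fun_prop : Continuous fun y => √|x - y| * D).intervalIntegrable a b
  have hpt : ∀ y ∈ Icc a b, |f x| ≤ |f y| + √|x - y| * D := fun y hy => by
    have := abs_sub_le_sqrt_mul_sqrt_integral_deriv_sq hf hf' hx hy
    have := abs_sub_abs_le_abs_sub (f x) (f y)
    linarith
  have havg : (b - a) * |f x| ≤ (∫ y in a..b, |f y|) + (∫ y in a..b, √|x - y|) * D :=
    calc (b - a) * |f x| = ∫ _ in a..b, |f x| := by simp
      _ ≤ ∫ y in a..b, (|f y| + √|x - y| * D) :=
        intervalIntegral.integral_mono_on hab.le intervalIntegrable_const (hfabs.add hdist) hpt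
      _ = (∫ y in a..b, |f y|) + (∫ y in a..b, √|x - y|) * D := by
        rw [intervalIntegral.integral_add hfabs hdist, intervalIntegral.integral_mul_const]
  have hL1 : ∫ y in a..b, |f y| ≤ √(b - a) * F :=
    intervalIntegral_abs_le_sqrt_mul_sqrt_integral_sq hab.le
      (hfc.intervalIntegrable_of_Icc hab.le) ((hfc.pow 2).intervalIntegrable_of_Icc hab.le)
  have hh : 0 < b - a := sub_pos.2 hab
  rw [← mul_le_mul_iff_right₀ hh]
  calc (b - a) * |f x| ≤ √(b - a) * F + √(b - a) * ((b - a) / √2) * D := by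
        have := mul_le_mul_of_nonneg_right (integral_sqrt_abs_sub_le hx) hD
        linarith
    _ = (b - a) * ((√(b - a))⁻¹ * F + 1 / √2 * √(b - a) * D) := by
        field_simp
        rw [Real.sq_sqrt hh.le]

/-- Sobolev-type embedding inequality
`sup_{x ∈ [a,b]} |f x| ≤ h^{-1/2} ‖f‖_{L²} + (1/√2) h^{1/2} ‖f'‖_{L²}`, and consequently the
smoothness indicator satisfies `𝓕_{[a,b]}[f] ≤ 1` whenever `f` is not identically zero. -/
theorem statement0 (a b : ℝ) (hab : a < b) (f : ℝ → ℝ)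
    (hdiff : ∀ x ∈ Set.Icc a b, HasDerivAt f (deriv f x) x)
    (hcont : ContinuousOn (deriv f) (Set.Icc a b)) :
    sSup ((fun x => |f x|) '' Set.Icc a b) ≤
      (b - a) ^ (-(1 : ℝ) / 2) * Real.sqrt (∫ x in a..b, f x ^ 2) +
        (1 / Real.sqrt 2) * (b - a) ^ ((1 : ℝ) / 2) * Real.sqrt (∫ x in a..b, deriv f x ^ 2) ∧
    ((∃ x ∈ Set.Icc a b, f x ≠ 0) → smoothnessIndicator a b f ≤ 1) := by
  have hh : 0 ≤ b - a := (sub_pos.2 hab).le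
  have hhalf : (b - a) ^ ((1 : ℝ) / 2) = √(b - a) := (Real.sqrt_eq_rpow _).symm
  have hneg_half : (b - a) ^ (-(1 : ℝ) / 2) = (√(b - a))⁻¹ := by
    rw [neg_div, Real.rpow_neg hh, hhalf]
  have hsup : sSup ((fun x => |f x|) '' Set.Icc a b) ≤
      (b - a) ^ (-(1 : ℝ) / 2) * √(∫ x in a..b, f x ^ 2) +
        1 / √2 * (b - a) ^ ((1 : ℝ) / 2) * √(∫ x in a..b, deriv f x ^ 2) := by
    rw [hhalf, hneg_half]
    refine csSup_le ⟨|f a|, a, left_mem_Icc.2 hab.le, rfl⟩ ?_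
    rintro _ ⟨x, hx, rfl⟩
    exact abs_le_sqrt_integral_sq_add_sqrt_integral_deriv_sq hab hdiff hcont hx
  have hsup_nonneg : 0 ≤ sSup ((fun x => |f x|) '' Set.Icc a b) :=
    Real.sSup_nonneg (by rintro _ ⟨x, -, rfl⟩; exact abs_nonneg _)
  exact ⟨hsup, fun _ => div_le_one_of_le₀ hsup (hsup_nonneg.trans hsup)⟩
end

section
/- Let a < b be real numbers with h = b − a, and let f : ℝ → ℝ be continuously differentiable on [a,b] and not identically zero on [a,b]. Then the smoothness indicator is invariant under the affine scaling to the reference interval: 𝓕_{[a,b]}[f] = 𝓕_{[−1,1]}[f ∘ φ_{[a,b]}]. -/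
/-- The affine scaling map `φ_{[a,b]} : [-1,1] → [a,b]`, `x̂ ↦ (h/2) x̂ + (a+b)/2`. -/
noncomputable def affineScaling (a b : ℝ) : ℝ → ℝ :=
  fun t => (b - a) / 2 * t + (a + b) / 2

/-!
Substituting `x = φ(t)` in `∫ₐᵇ f²` and `∫ₐᵇ f'²` multiplies the first by the Jacobian factor
`2/h` and the second by `(h/2)² · 2/h = h/2`, since `(f ∘ φ)' = (h/2) f' ∘ φ`. On `[-1,1]` the
weights are `2^{∓1/2}` instead of `h^{∓1/2}`, so both terms of the denominator are unchanged,
and so is the numerator because `φ` maps `[-1,1]` onto `[a,b]`.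
-/

open Set

theorem deriv_comp_mul_add (f : ℝ → ℝ) (c d x : ℝ) :
    deriv (fun x => f (c * x + d)) x = c * deriv f (c * x + d) := by
  rw [deriv_comp_mul_left c (fun y => f (y + d)) x, deriv_comp_add_const, smul_eq_mul]

section affineScaling

variable {a b : ℝ}

theorem image_affineScaling_Icc (hab : a < b) : affineScaling a b '' Icc (-1) 1 = Icc a b := by
  unfold affineScaling
  rw [image_affine_Icc' (by linarith)]
  congr 1 <;> ring

theorem deriv_comp_affineScaling (f : ℝ → ℝ) :
    deriv (f ∘ affineScaling a b) = fun t => (b - a) / 2 * deriv f (affineScaling a b t) :=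
  funext fun t => deriv_comp_mul_add f _ _ t

theorem integral_comp_affineScaling (hab : a ≠ b) (g : ℝ → ℝ) :
    ∫ t in (-1 : ℝ)..1, g (affineScaling a b t) = 2 / (b - a) * ∫ x in a..b, g x := by
  have hc : (b - a) / 2 ≠ 0 := by
    have := sub_ne_zero.mpr hab.symm
    positivity
  unfold affineScaling
  rw [intervalIntegral.integral_comp_mul_add g hc, smul_eq_mul, inv_div]
  congr 2 <;> ring

end affineScaling

theorem rpow_neg_half_mul_sqrt {h : ℝ} (hh : 0 ≤ h) (A : ℝ) :
    h ^ (-(1 : ℝ) / 2) * √A = √(A / h) := by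
  rw [neg_div, Real.rpow_neg hh, ← Real.sqrt_eq_rpow, Real.sqrt_div' _ hh, inv_mul_eq_div]

theorem rpow_half_mul_sqrt {h : ℝ} (hh : 0 ≤ h) (B : ℝ) :
    h ^ ((1 : ℝ) / 2) * √B = √(h * B) := by
  rw [← Real.sqrt_eq_rpow, Real.sqrt_mul hh]

theorem smoothnessIndicator_eq_sqrt {a b : ℝ} (hab : a ≤ b) (f : ℝ → ℝ) :
    smoothnessIndicator a b f = sSup ((fun x => |f x|) '' Icc a b) /
      (√((∫ x in a..b, f x ^ 2) / (b - a)) +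
        1 / √2 * √((b - a) * ∫ x in a..b, deriv f x ^ 2)) := by
  have hh : 0 ≤ b - a := sub_nonneg.mpr hab
  rw [smoothnessIndicator, mul_assoc (1 / √2), rpow_neg_half_mul_sqrt hh, rpow_half_mul_sqrt hh]

theorem statement1_general (a b : ℝ) (hab : a < b) (f : ℝ → ℝ) :
    smoothnessIndicator a b f = smoothnessIndicator (-1) 1 (f ∘ affineScaling a b) := by
  have hh : b - a ≠ 0 := sub_ne_zero.mpr hab.ne'
  have hsup : (fun x => |(f ∘ affineScaling a b) x|) '' Icc (-1) 1
      = (fun x => |f x|) '' Icc a b := by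
    rw [← image_affineScaling_Icc hab, ← image_comp]; rfl
  have hf : ∫ t in (-1 : ℝ)..1, (f ∘ affineScaling a b) t ^ 2
      = 2 / (b - a) * ∫ x in a..b, f x ^ 2 :=
    integral_comp_affineScaling hab.ne (fun x => f x ^ 2)
  have hf' : ∫ t in (-1 : ℝ)..1, deriv (f ∘ affineScaling a b) t ^ 2
      = (b - a) / 2 * ∫ x in a..b, deriv f x ^ 2 := by
    simp_rw [deriv_comp_affineScaling, mul_pow, intervalIntegral.integral_const_mul]
    rw [integral_comp_affineScaling hab.ne (fun x => deriv f x ^ 2)]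
    field_simp
  rw [smoothnessIndicator_eq_sqrt hab.le, smoothnessIndicator_eq_sqrt (by norm_num), hsup, hf, hf']
  congr 3
  · field_simp
    ring
  · ring_nf

/-- The smoothness indicator is invariant under the affine scaling to the
reference interval: `𝓕_{[a,b]}[f] = 𝓕_{[-1,1]}[f ∘ φ_{[a,b]}]`. -/
theorem statement1 (a b : ℝ) (hab : a < b) (f : ℝ → ℝ)
    (hdiff : ∀ x ∈ Set.Icc a b, HasDerivAt f (deriv f x) x)
    (hcont : ContinuousOn (deriv f) (Set.Icc a b))
    (hne : ∃ x ∈ Set.Icc a b, f x ≠ 0) :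
    smoothnessIndicator a b f = smoothnessIndicator (-1) 1 (f ∘ affineScaling a b) :=
  statement1_general a b hab f
end

section
/- Let a₀, a₁ ∈ ℝ with a₀ ≠ 0, and let g : ℝ → ℝ be the linear function g(x) = a₀ + a₁·x. Then the smoothness indicator of g on the reference interval [−1,1] equals 𝓕_{[−1,1]}[g] = (1 + ξ)/(√(1 + ξ²/3) + √2·ξ), where ξ = |a₁/a₀|. -/
open Set

theorem smoothnessIndicator_eq_of_le {a b : ℝ} (hab : a ≤ b) (f : ℝ → ℝ) :
    smoothnessIndicator a b f =
      sSup ((fun x => |f x|) '' Icc a b) /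
        (√((∫ x in a..b, f x ^ 2) / (b - a)) +
          √((b - a) * (∫ x in a..b, deriv f x ^ 2) / 2)) := by
  have hh : 0 ≤ b - a := sub_nonneg.mpr hab
  rw [smoothnessIndicator, neg_div, Real.rpow_neg hh, ← Real.sqrt_eq_rpow,
    Real.sqrt_div' _ hh, Real.sqrt_div' _ zero_le_two, Real.sqrt_mul hh]
  ring

theorem abs_add_abs_le_max_abs_add_abs_sub {α : Type*} [AddCommGroup α] [LinearOrder α]
    [IsOrderedAddMonoid α] (a b : α) : |a| + |b| ≤ max |a + b| |a - b| := by
  rcases abs_cases a with ⟨ha, -⟩ | ⟨ha, -⟩ <;> rcases abs_cases b with ⟨hb, -⟩ | ⟨hb, -⟩ <;>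
    simp only [ha, hb, le_max_iff]
  · exact Or.inl (le_abs_self _)
  · exact Or.inr (by rw [sub_eq_add_neg]; exact le_abs_self _)
  · exact Or.inr (by rw [neg_add_eq_sub, ← neg_sub]; exact neg_le_abs _)
  · exact Or.inl (by rw [← neg_add]; exact neg_le_abs _)

theorem sSup_image_abs_affine_Icc (a₀ a₁ : ℝ) :
    sSup ((fun x => |a₀ + a₁ * x|) '' Icc (-1) 1) = |a₀| + |a₁| := by
  have hle : ∀ x ∈ Icc (-1 : ℝ) 1, |a₀ + a₁ * x| ≤ |a₀| + |a₁| := fun x hx =>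
    calc |a₀ + a₁ * x| ≤ |a₀| + |a₁| * |x| := by rw [← abs_mul]; exact abs_add_le _ _
      _ ≤ |a₀| + |a₁| := by
        gcongr; exact mul_le_of_le_one_right (abs_nonneg _) (abs_le.mpr hx)
  refine IsGreatest.csSup_eq ⟨?_, by rintro _ ⟨x, hx, rfl⟩; exact hle x hx⟩
  rcases le_max_iff.mp (abs_add_abs_le_max_abs_add_abs_sub a₀ a₁) with h | h
  · exact ⟨1, by norm_num, le_antisymm (hle 1 (by norm_num)) (by simpa using h)⟩
  · refine ⟨-1, by norm_num, le_antisymm (hle (-1) (by norm_num)) ?_⟩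
    simpa [← sub_eq_add_neg] using h

theorem integral_sq_affine_neg_one_one (a₀ a₁ : ℝ) :
    ∫ x in (-1 : ℝ)..1, (a₀ + a₁ * x) ^ 2 = 2 * a₀ ^ 2 + 2 / 3 * a₁ ^ 2 := by
  have hF : ∀ x ∈ uIcc (-1 : ℝ) 1, HasDerivAt
      (fun x => a₀ ^ 2 * x + a₀ * a₁ * x ^ 2 + a₁ ^ 2 * x ^ 3 / 3) ((a₀ + a₁ * x) ^ 2) x := by
    intro x _
    refine ((((hasDerivAt_id x).const_mul (a₀ ^ 2)).add
      ((hasDerivAt_pow 2 x).const_mul (a₀ * a₁))).add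
      (((hasDerivAt_pow 3 x).const_mul (a₁ ^ 2)).div_const 3)).congr_deriv ?_
    norm_num
    ring
  rw [intervalIntegral.integral_eq_sub_of_hasDerivAt hF
    ((by fun_prop : Continuous fun x : ℝ => (a₀ + a₁ * x) ^ 2).intervalIntegrable _ _)]
  ring

theorem smoothnessIndicator_affine_neg_one_one (a₀ a₁ : ℝ) :
    smoothnessIndicator (-1) 1 (fun x => a₀ + a₁ * x) =
      (|a₀| + |a₁|) / (√(a₀ ^ 2 + a₁ ^ 2 / 3) + √2 * |a₁|) := by
  have hderiv : ∫ x in (-1 : ℝ)..1, deriv (fun x => a₀ + a₁ * x) x ^ 2 = 2 * a₁ ^ 2 := by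
    norm_num
  rw [smoothnessIndicator_eq_of_le (by norm_num), sSup_image_abs_affine_Icc,
    integral_sq_affine_neg_one_one, hderiv, ← Real.sqrt_sq_eq_abs a₁, ← Real.sqrt_mul zero_le_two]
  congr 3 <;> ring

/-- For the linear function `g x = a₀ + a₁ x` with `a₀ ≠ 0`, the smoothness
indicator on the reference interval `[-1,1]` equals
`(1 + ξ)/(√(1 + ξ²/3) + √2 ξ)` with `ξ = |a₁/a₀|`. -/
theorem statement2 (a₀ a₁ : ℝ) (ha₀ : a₀ ≠ 0) :
    smoothnessIndicator (-1) 1 (fun x => a₀ + a₁ * x) =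
      (1 + |a₁ / a₀|) /
        (Real.sqrt (1 + |a₁ / a₀| ^ 2 / 3) + Real.sqrt 2 * |a₁ / a₀|) := by
  rw [smoothnessIndicator_affine_neg_one_one]
  have ha : 0 < |a₀| := abs_pos.mpr ha₀
  have h₁ : |a₁| = |a₀| * |a₁ / a₀| := by rw [abs_div, mul_div_cancel₀ _ ha.ne']
  set ξ := |a₁ / a₀|
  have h₂ : √(a₀ ^ 2 + a₁ ^ 2 / 3) = |a₀| * √(1 + ξ ^ 2 / 3) := by
    rw [← Real.sqrt_sq ha.le, ← Real.sqrt_mul (sq_nonneg _), ← sq_abs a₁, h₁, mul_pow, sq_abs]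
    congr 1; ring
  rw [h₁, h₂, ← mul_one_add, mul_left_comm, ← mul_add, mul_div_mul_left _ _ ha.ne']
end

section
/- Let a < b be real numbers with h = b − a, let p ≥ 1 be an integer, and let a₀, …, a_p ∈ ℝ with a_{p−1} ≠ 0. Define f : [a,b] → ℝ by f(x) = Σ_{l=0}^{p} a_l · L_l(φ_{[a,b]}^{−1}(x)). Then the smoothness indicator of the (p−1)-st derivative of f satisfies 𝓕_{[a,b]}[f^{(p−1)}] = (1 + ξ_p)/(√(1 + ξ_p²/3) + √2·ξ_p), where ξ_p = (2p − 1)·|a_p|/|a_{p−1}|. -/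
/-- The Legendre polynomial `L_n` on `ℝ`, defined via the Rodrigues formula. -/
noncomputable def legendre (n : ℕ) : ℝ → ℝ :=
  fun x => (1 / ((2 : ℝ) ^ n * (n.factorial : ℝ))) *
    iteratedDeriv n (fun y => (y ^ 2 - 1) ^ n) x

/-! The `(p-1)`-st derivative annihilates `L_0, …, L_{p-2}` and, read off from the two top
coefficients of `(x² - 1)ⁿ`, turns `L_{p-1}` into a positive constant `A` and `L_p` into `(2p-1) A`
times the reference coordinate. So `f^{(p-1)} = α + β t` with `t = φ⁻¹(x) ∈ [-1, 1]` and
`|β| / |α| = ξ_p`. For such a function the sup norm `|α| + |β|` is attained at an endpoint,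
`h^{-1/2} ‖f‖ = √(α² + β²/3)` and `h^{1/2} ‖f'‖ / √2 = √2 |β|`; dividing by `|α|` gives the
claim. -/

open Polynomial Set

theorem Polynomial.iteratedDeriv_eval {𝕜 : Type*} [NontriviallyNormedField 𝕜] (P : 𝕜[X])
    (n : ℕ) : iteratedDeriv n (fun x => P.eval x) = fun x => (derivative^[n] P).eval x := by
  induction n generalizing P with
  | zero => simp
  | succ n ih =>
    have hderiv : deriv (fun x => P.eval x) = fun x => P.derivative.eval x := by
      ext x
      exact P.deriv
    rw [iteratedDeriv_succ', hderiv, ih, Function.iterate_succ_apply]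

theorem Polynomial.iterate_derivative_comp_C_mul_X_add_C {R : Type*} [CommSemiring R] (P : R[X])
    (u v : R) (n : ℕ) :
    derivative^[n] (P.comp (C u * X + C v)) =
      C (u ^ n) * (derivative^[n] P).comp (C u * X + C v) := by
  induction n generalizing P with
  | zero => simp
  | succ n ih =>
    rw [Function.iterate_succ_apply, Function.iterate_succ_apply, derivative_comp]
    simp only [derivative_add, derivative_mul, derivative_C, derivative_X, zero_mul, mul_one,
      zero_add, add_zero]
    rw [iterate_derivative_C_mul, ih, pow_succ, C_mul, mul_comm (C (u ^ n)) (C u), mul_assoc]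

theorem Polynomial.iterate_derivative_of_natDegree_le_succ {R : Type*} [CommSemiring R] {P : R[X]}
    {n : ℕ} (hP : P.natDegree ≤ n + 1) :
    derivative^[n] P = C (((n + 1).factorial : R) * P.coeff (n + 1)) * X +
      C ((n.factorial : R) * P.coeff n) := by
  have hdeg : (derivative^[n] P).natDegree ≤ 1 :=
    (natDegree_iterate_derivative P n).trans (by omega)
  rw [eq_X_add_C_of_natDegree_le_one hdeg, coeff_iterate_derivative, coeff_iterate_derivative,
    zero_add, Nat.descFactorial_self, add_comm 1 n]
  have hdesc : (n + 1).descFactorial n = (n + 1).factorial := by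
    simpa using Nat.factorial_mul_descFactorial (Nat.le_succ n)
  simp [hdesc, nsmul_eq_mul]

section XSqSubOne

variable {R : Type*} [CommRing R]

theorem natDegree_X_sq_sub_one_pow [Nontrivial R] (m : ℕ) :
    ((X ^ 2 - 1 : R[X]) ^ m).natDegree = 2 * m := by
  rw [← C_1, (monic_X_pow_sub_C (1 : R) two_ne_zero).natDegree_pow, natDegree_X_pow_sub_C,
    mul_comm]

theorem coeff_X_sq_sub_one_pow_two_mul [Nontrivial R] (m : ℕ) :
    ((X ^ 2 - 1 : R[X]) ^ m).coeff (2 * m) = 1 := by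
  rw [← natDegree_X_sq_sub_one_pow (R := R), ← leadingCoeff, ← C_1]
  exact ((monic_X_pow_sub_C (1 : R) two_ne_zero).pow m).leadingCoeff

theorem coeff_X_sq_sub_one_pow_odd (m k : ℕ) :
    ((X ^ 2 - 1 : R[X]) ^ m).coeff (2 * k + 1) = 0 := by
  have heven : (X ^ 2 - 1 : R[X]) ^ m = expand R 2 ((X - 1) ^ m) := by
    rw [map_pow, map_sub, expand_X, map_one]
  rw [heven, coeff_expand two_pos, if_neg (by omega)]

end XSqSubOne

noncomputable def rodrigues (n : ℕ) : ℝ[X] :=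
  C (1 / (2 ^ n * n.factorial : ℝ)) * derivative^[n] ((X ^ 2 - 1) ^ n)

theorem legendre_eq_eval_rodrigues (n : ℕ) : legendre n = fun x => (rodrigues n).eval x := by
  have hpow : (fun y : ℝ => (y ^ 2 - 1) ^ n) = fun y => ((X ^ 2 - 1 : ℝ[X]) ^ n).eval y := by
    simp
  funext x
  rw [legendre, hpow, iteratedDeriv_eval, rodrigues, eval_mul, eval_C]

theorem iterate_derivative_rodrigues (k n : ℕ) :
    derivative^[k] (rodrigues n) =
      C (1 / (2 ^ n * n.factorial : ℝ)) * derivative^[k + n] ((X ^ 2 - 1) ^ n) := by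
  rw [rodrigues, iterate_derivative_C_mul, Function.iterate_add_apply]

theorem iterate_derivative_rodrigues_of_lt {k n : ℕ} (h : n < k) :
    derivative^[k] (rodrigues n) = 0 := by
  rw [iterate_derivative_rodrigues,
    iterate_derivative_eq_zero (by rw [natDegree_X_sq_sub_one_pow]; omega), mul_zero]

theorem iterate_derivative_rodrigues_self (n : ℕ) :
    derivative^[n] (rodrigues n) = C ((2 * n).factorial / (2 ^ n * n.factorial : ℝ)) := by
  rw [iterate_derivative_rodrigues, ← two_mul, iterate_derivative_of_natDegree_le_succ
    (by rw [natDegree_X_sq_sub_one_pow]; omega), coeff_X_sq_sub_one_pow_odd,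
    coeff_X_sq_sub_one_pow_two_mul]
  simp only [mul_zero, C_0, zero_mul, zero_add, mul_one, ← C_mul]
  congr 1
  ring

theorem iterate_derivative_rodrigues_succ (n : ℕ) :
    derivative^[n] (rodrigues (n + 1)) =
      C ((2 * n + 1) * ((2 * n).factorial / (2 ^ n * n.factorial : ℝ))) * X := by
  rw [iterate_derivative_rodrigues, show n + (n + 1) = 2 * n + 1 by ring,
    iterate_derivative_of_natDegree_le_succ (by rw [natDegree_X_sq_sub_one_pow]; omega),
    coeff_X_sq_sub_one_pow_odd, show 2 * n + 1 + 1 = 2 * (n + 1) by ring,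
    coeff_X_sq_sub_one_pow_two_mul]
  simp only [mul_zero, C_0, add_zero, mul_one, ← mul_assoc, ← C_mul]
  congr 2
  rw [show 2 * (n + 1) = (2 * n + 1) + 1 by ring]
  push_cast [Nat.factorial_succ, pow_succ]
  field_simp
  ring

theorem iterate_derivative_sum_rodrigues (n : ℕ) (c : ℕ → ℝ) :
    derivative^[n] (∑ l ∈ Finset.range (n + 2), C (c l) * rodrigues l) =
      C ((2 * n).factorial / (2 ^ n * n.factorial : ℝ)) *
        (C (c n) + C ((2 * n + 1) * c (n + 1)) * X) := by
  rw [iterate_derivative_sum, Finset.sum_range_succ, Finset.sum_range_succ, Finset.sum_eq_zero,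
    zero_add]
  · simp only [iterate_derivative_C_mul, iterate_derivative_rodrigues_self,
      iterate_derivative_rodrigues_succ, C_mul]
    ring
  · intro l hl
    rw [iterate_derivative_C_mul, iterate_derivative_rodrigues_of_lt (Finset.mem_range.1 hl),
      mul_zero]

theorem iteratedDeriv_sum_legendre_comp_affine (a b : ℝ) (n : ℕ) (c : ℕ → ℝ) :
    iteratedDeriv n
        (fun x => ∑ l ∈ Finset.range (n + 2), c l * legendre l ((2 * x - (a + b)) / (b - a))) =
      fun x => (2 / (b - a)) ^ n * ((2 * n).factorial / (2 ^ n * n.factorial)) * c n +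
        (2 / (b - a)) ^ n * ((2 * n).factorial / (2 ^ n * n.factorial)) *
          ((2 * n + 1) * c (n + 1)) * ((2 * x - (a + b)) / (b - a)) := by
  set M : ℝ[X] := C (2 / (b - a)) * X + C (-(a + b) / (b - a))
  have hM (x : ℝ) : M.eval x = (2 * x - (a + b)) / (b - a) := by
    simp only [M, eval_add, eval_mul, eval_C, eval_X]
    ring
  have hsum : (fun x => ∑ l ∈ Finset.range (n + 2), c l * legendre l ((2 * x - (a + b)) / (b - a)))
      = fun x => ((∑ l ∈ Finset.range (n + 2), C (c l) * rodrigues l).comp M).eval x := by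
    ext x
    simp only [eval_comp, hM, eval_finsetSum, eval_mul, eval_C, legendre_eq_eval_rodrigues]
  rw [hsum, iteratedDeriv_eval, iterate_derivative_comp_C_mul_X_add_C,
    iterate_derivative_sum_rodrigues]
  ext x
  simp only [eval_mul, eval_C, eval_comp, eval_add, eval_X]
  ring

theorem image_affineInv_Icc {a b : ℝ} (hab : a < b) :
    (fun x => (2 * x - (a + b)) / (b - a)) '' Icc a b = Icc (-1) 1 := by
  have h0 : 0 < b - a := sub_pos.2 hab
  have haffine : (fun x => (2 * x - (a + b)) / (b - a)) =
      fun x => 2 / (b - a) * x + -(a + b) / (b - a) := by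
    ext x
    ring
  rw [haffine, image_affine_Icc' (by positivity)]
  congr 1 <;> field_simp <;> ring

theorem sSup_abs_affine_Icc (α β : ℝ) :
    sSup ((fun t => |α + β * t|) '' Icc (-1) 1) = |α| + |β| := by
  refine IsGreatest.csSup_eq ⟨?_, ?_⟩
  · rcases le_total 0 (α * β) with h | h
    · refine ⟨1, by norm_num, ?_⟩
      dsimp only
      rw [mul_one, abs_add_eq_add_abs_iff]
      exact mul_nonneg_iff.1 h
    · refine ⟨-1, by norm_num, ?_⟩
      dsimp only
      rw [mul_neg_one, ← abs_neg β, abs_add_eq_add_abs_iff]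
      rcases mul_nonpos_iff.1 h with h | h
      · exact Or.inl ⟨h.1, neg_nonneg.2 h.2⟩
      · exact Or.inr ⟨h.1, neg_nonpos.2 h.2⟩
  · rintro _ ⟨t, ht, rfl⟩
    calc |α + β * t| ≤ |α| + |β| * |t| := (abs_add_le _ _).trans_eq (by rw [abs_mul])
      _ ≤ |α| + |β| * 1 := by gcongr; exact abs_le.2 ht
      _ = |α| + |β| := by rw [mul_one]

theorem integral_comp_affineInv {a b : ℝ} (hab : a ≠ b) (g : ℝ → ℝ) :
    ∫ x in a..b, g ((2 * x - (a + b)) / (b - a)) = (b - a) / 2 * ∫ t in (-1)..1, g t := by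
  have hba : b - a ≠ 0 := sub_ne_zero.2 hab.symm
  have haffine (x : ℝ) : (2 * x - (a + b)) / (b - a) = x / ((b - a) / 2) - (a + b) / (b - a) := by
    field_simp
  simp_rw [haffine]
  rw [intervalIntegral.integral_comp_div_sub _ (by positivity), smul_eq_mul]
  congr 2 <;> field_simp <;> ring

theorem integral_affine_sq (α β : ℝ) :
    ∫ t in (-1 : ℝ)..1, (α + β * t) ^ 2 = 2 * (α ^ 2 + β ^ 2 / 3) := by
  have hF (t : ℝ) :
      HasDerivAt (fun t => α ^ 2 * t + α * β * t ^ 2 + β ^ 2 * t ^ 3 / 3) ((α + β * t) ^ 2) t := by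
    refine ((((hasDerivAt_id' t).const_mul (α ^ 2)).fun_add
      ((hasDerivAt_pow 2 t).const_mul (α * β))).fun_add
        (((hasDerivAt_pow 3 t).const_mul (β ^ 2)).div_const 3)).congr_deriv ?_
    norm_num
    ring
  rw [intervalIntegral.integral_eq_sub_of_hasDerivAt (fun t _ => hF t)
    (Continuous.intervalIntegrable (by fun_prop) _ _)]
  ring

theorem deriv_affine_comp_affineInv (a b α β : ℝ) :
    deriv (fun x => α + β * ((2 * x - (a + b)) / (b - a))) = fun _ => 2 * β / (b - a) := by
  ext x
  have h := ((((hasDerivAt_id x).const_mul 2).sub_const (a + b)).div_const (b - a)).const_mul β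
  exact (h.const_add α).deriv.trans (by ring)

theorem abs_add_abs_div_sqrt_eq {α : ℝ} (hα : α ≠ 0) (β : ℝ) :
    (|α| + |β|) / (√(α ^ 2 + β ^ 2 / 3) + √2 * |β|) =
      (1 + |β| / |α|) / (√(1 + (|β| / |α|) ^ 2 / 3) + √2 * (|β| / |α|)) := by
  have hα' : 0 < |α| := abs_pos.2 hα
  have hsqrt : |α| * √(1 + (|β| / |α|) ^ 2 / 3) = √(α ^ 2 + β ^ 2 / 3) := by
    rw [div_pow, sq_abs, sq_abs, ← Real.sqrt_sq_eq_abs, ← Real.sqrt_mul (sq_nonneg _)]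
    congr 1
    field_simp
  rw [← hsqrt]
  field_simp

theorem smoothnessIndicator_affine {a b : ℝ} (hab : a < b) {α : ℝ} (hα : α ≠ 0) (β : ℝ) :
    smoothnessIndicator a b (fun x => α + β * ((2 * x - (a + b)) / (b - a))) =
      (1 + |β| / |α|) / (√(1 + (|β| / |α|) ^ 2 / 3) + √2 * (|β| / |α|)) := by
  have h0 : 0 < b - a := sub_pos.2 hab
  have hsup : sSup ((fun x => |α + β * ((2 * x - (a + b)) / (b - a))|) '' Icc a b) =
      |α| + |β| := by
    change sSup (((fun t => |α + β * t|) ∘ fun x => (2 * x - (a + b)) / (b - a)) '' Icc a b) = _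
    rw [image_comp, image_affineInv_Icc hab, sSup_abs_affine_Icc]
  have hL2 : ∫ x in a..b, (α + β * ((2 * x - (a + b)) / (b - a))) ^ 2 =
      (b - a) * (α ^ 2 + β ^ 2 / 3) := by
    rw [integral_comp_affineInv hab.ne (fun t => (α + β * t) ^ 2), integral_affine_sq]
    ring
  have hH1 : ∫ x in a..b, deriv (fun x => α + β * ((2 * x - (a + b)) / (b - a))) x ^ 2 =
      4 * β ^ 2 / (b - a) := by
    rw [deriv_affine_comp_affineInv, intervalIntegral.integral_const, smul_eq_mul]
    field_simp
    ring
  have hden : (b - a) ^ (-(1 : ℝ) / 2) * √((b - a) * (α ^ 2 + β ^ 2 / 3)) +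
      1 / √2 * (b - a) ^ ((1 : ℝ) / 2) * √(4 * β ^ 2 / (b - a)) =
        √(α ^ 2 + β ^ 2 / 3) + √2 * |β| := by
    have hsqrt4 : √(4 * β ^ 2) = 2 * |β| := by
      rw [Real.sqrt_mul (by norm_num), Real.sqrt_sq_eq_abs, show (4 : ℝ) = 2 ^ 2 by norm_num,
        Real.sqrt_sq zero_le_two]
    have hsqrt : 0 < √(b - a) := Real.sqrt_pos.2 h0
    rw [neg_div, Real.rpow_neg h0.le, ← Real.sqrt_eq_rpow, Real.sqrt_mul h0.le,
      Real.sqrt_div (by positivity), hsqrt4]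
    field_simp
    linear_combination (-|β|) * Real.mul_self_sqrt zero_le_two
  rw [smoothnessIndicator, hsup, hL2, hH1, hden, abs_add_abs_div_sqrt_eq hα]

/-- For `f = Σ_{l=0}^p c_l L_l ∘ φ_{[a,b]}⁻¹` with `c_{p-1} ≠ 0`, the
smoothness indicator of `f^{(p-1)}` equals `(1 + ξ_p)/(√(1 + ξ_p²/3) + √2 ξ_p)` with
`ξ_p = (2p - 1) |c_p| / |c_{p-1}|`. Here `φ_{[a,b]}⁻¹(x) = (2x - (a+b))/(b-a)`. -/
theorem statement4 (a b : ℝ) (hab : a < b) (p : ℕ) (hp : 1 ≤ p)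
    (c : ℕ → ℝ) (hc : c (p - 1) ≠ 0) :
    smoothnessIndicator a b
        (iteratedDeriv (p - 1)
          (fun x => ∑ l ∈ Finset.range (p + 1),
            c l * legendre l ((2 * x - (a + b)) / (b - a)))) =
      (1 + (2 * (p : ℝ) - 1) * |c p| / |c (p - 1)|) /
        (Real.sqrt (1 + ((2 * (p : ℝ) - 1) * |c p| / |c (p - 1)|) ^ 2 / 3) +
          Real.sqrt 2 * ((2 * (p : ℝ) - 1) * |c p| / |c (p - 1)|)) := by
  obtain ⟨n, rfl⟩ : ∃ n, p = n + 1 := ⟨p - 1, by omega⟩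
  rw [Nat.add_sub_cancel] at hc ⊢
  rw [iteratedDeriv_sum_legendre_comp_affine]
  set K : ℝ := (2 / (b - a)) ^ n * ((2 * n).factorial / (2 ^ n * n.factorial))
  have hK : 0 < K := by
    have hba : 0 < b - a := sub_pos.2 hab
    positivity
  have hratio : |K * ((2 * n + 1) * c (n + 1))| / |K * c n| =
      (2 * ((n + 1 : ℕ) : ℝ) - 1) * |c (n + 1)| / |c n| := by
    rw [abs_mul K, abs_mul K, mul_div_mul_left _ _ (abs_pos.2 hK.ne').ne', abs_mul,
      abs_of_pos (by positivity : (0 : ℝ) < 2 * n + 1)]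
    push_cast
    ring
  rw [smoothnessIndicator_affine hab (mul_ne_zero hK.ne' hc), hratio]
end

section
/- For every real ξ ≥ 0 one has g(ξ) = (1 + ξ)/(√(1 + ξ²/3) + √2·ξ) > √3/(√6 + 1). -/
/-! Multiplying the denominator by `√3` turns the claim into `√(3 + ξ²) < √6 + 1 + ξ`,
which follows from `√(3 + ξ²) ≤ √3 + ξ` and `√3 < √6`. -/

open Real

lemma sqrt_add_sq_le_sqrt_add {a ξ : ℝ} (ha : 0 ≤ a) (hξ : 0 ≤ ξ) : √(a + ξ ^ 2) ≤ √a + ξ := by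
  rw [sqrt_le_iff]
  refine ⟨by positivity, ?_⟩
  nlinarith [sq_sqrt ha, sqrt_nonneg a]

lemma sqrt_three_add_sq_lt {ξ : ℝ} (hξ : 0 ≤ ξ) : √(3 + ξ ^ 2) < √6 + 1 + ξ :=
  calc √(3 + ξ ^ 2) ≤ √3 + ξ := sqrt_add_sq_le_sqrt_add (by norm_num) hξ
    _ < √6 + 1 + ξ := by
      have : √3 < √6 := sqrt_lt_sqrt (by norm_num) (by norm_num)
      linarith

lemma sqrt_three_mul_denom (ξ : ℝ) :
    √3 * (√(1 + ξ ^ 2 / 3) + √2 * ξ) = √(3 + ξ ^ 2) + √6 * ξ := by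
  have h₁ : √3 * √(1 + ξ ^ 2 / 3) = √(3 + ξ ^ 2) := by
    rw [← sqrt_mul (by norm_num)]
    ring_nf
  have h₂ : √3 * √2 = √6 := by
    rw [← sqrt_mul (by norm_num)]
    norm_num
  rw [mul_add, h₁, ← mul_assoc, h₂]

/-- For every `ξ ≥ 0`, `(1 + ξ)/(√(1 + ξ²/3) + √2 ξ) > √3/(√6 + 1)`. -/
theorem statement6 (ξ : ℝ) (hξ : 0 ≤ ξ) :
    Real.sqrt 3 / (Real.sqrt 6 + 1) <
      (1 + ξ) / (Real.sqrt (1 + ξ ^ 2 / 3) + Real.sqrt 2 * ξ) := by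
  have hden : 0 < √(1 + ξ ^ 2 / 3) + √2 * ξ := by
    have : 0 < √(1 + ξ ^ 2 / 3) := sqrt_pos.mpr (by positivity)
    positivity
  rw [div_lt_div_iff₀ (by positivity) hden, sqrt_three_mul_denom]
  linarith [sqrt_three_add_sq_lt hξ]
end
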